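/- arXiv:1701.07652 — 2 statements merged into one kernel-verified Lean document; each statement's English description precedes it below -/
import Mathlib

section
/- Let $r$ be a positive integer and $a, \delta$ real with $0 < \delta < a/4$. There exists a function $\theta : \mathbb{R} \to \mathbb{R}$ which is $r$ times continuously differentiable, satisfies $\theta(y) = 1$ for $|y| \le a - \delta$, $0 < \theta(y) < 1$ for $a - \delta < |y| < a + \delta$, $\theta(y) = 0$ for $|y| \ge a + \delta$, and whose Fourier transform $\Theta(x) = \int_{-\infty}^{\infty} \theta(y) e^{-2\pi i x y} \, dy$ satisfies $|\Theta(x)| \le \min\left(2a, \frac{1}{|x|}\left(\frac{r}{|x|\delta}\right)^r\right)$ for all $x \ne 0$. -/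
/-!
Take for `θ` the `(r + 1)`-fold moving average, with window `[y - ε, y + ε]` and `ε = δ / (r + 1)`,
of the indicator of `[-a, a]`. Averaging a continuous function gains one derivative, and each
average moves the edges of the plateau and of the support by `ε`, keeping values in `(0, 1)`
strictly between them. Averaging is convolution with the normalised box, so on the Fourier side it
multiplies by `sin (2πεx) / (2πεx)`, of modulus at most `1` and at most `1 / (2πε|x|)`; the
indicator itself has transform bounded by `2a` and by `1 / (π|x|)`. Since `r + 1 ≤ 2πr`, the
product is at most `(1 / |x|) (r / (|x| δ))^r`.
-/

open MeasureTheory Set FourierTransform ContinuousLinearMap Convolution Real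

namespace SegalSmoothing

noncomputable def box (m : ℝ) : ℝ → ℝ := (Icc (-m) m).indicator 1

noncomputable def movingAverage (ε : ℝ) (f : ℝ → ℝ) (y : ℝ) : ℝ :=
  (2 * ε)⁻¹ * ∫ s in y - ε..y + ε, f s

section Regularity

lemma contDiff_primitive {f : ℝ → ℝ} {n : ℕ} (hf : ContDiff ℝ n f) :
    ContDiff ℝ (n + 1) fun u => ∫ s in (0 : ℝ)..u, f s := by
  have hderiv : ∀ u, HasDerivAt (fun u => ∫ s in (0 : ℝ)..u, f s) (f u) u := fun u =>
    (hf.continuous.integral_hasStrictDerivAt 0 u).hasDerivAt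
  refine contDiff_succ_iff_deriv.2 ⟨fun u => (hderiv u).differentiableAt, by simp, ?_⟩
  rwa [funext fun u => (hderiv u).deriv]

lemma movingAverage_eq_primitive_sub {ε : ℝ} {f : ℝ → ℝ}
    (hf : ∀ a b, IntervalIntegrable f volume a b) :
    movingAverage ε f =
      fun y => (2 * ε)⁻¹ * ((∫ s in (0 : ℝ)..y + ε, f s) - ∫ s in (0 : ℝ)..y - ε, f s) := by
  ext y
  rw [movingAverage, intervalIntegral.integral_interval_sub_left (hf _ _) (hf _ _)]

lemma continuous_movingAverage (ε : ℝ) {f : ℝ → ℝ} (hf : ∀ a b, IntervalIntegrable f volume a b) :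
    Continuous (movingAverage ε f) := by
  have hF := intervalIntegral.continuous_primitive hf 0
  rw [movingAverage_eq_primitive_sub hf]
  fun_prop

lemma ContDiff.movingAverage {ε : ℝ} {f : ℝ → ℝ} {n : ℕ} (hf : ContDiff ℝ n f) :
    ContDiff ℝ (n + 1) (movingAverage ε f) := by
  have hF := contDiff_primitive hf
  rw [movingAverage_eq_primitive_sub hf.continuous.intervalIntegrable]
  fun_prop

lemma contDiff_iterate_movingAverage (ε : ℝ) {f : ℝ → ℝ} (hf : Continuous f) (n : ℕ) :
    ContDiff ℝ n ((movingAverage ε)^[n] f) := by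
  induction n with
  | zero => exact contDiff_zero.2 hf
  | succ n ih =>
    rw [Function.iterate_succ_apply', Nat.cast_succ]
    exact ContDiff.movingAverage ih

end Regularity

section Values

variable {ε m : ℝ} {f : ℝ → ℝ}

lemma movingAverage_eq_of_eqOn (hε : 0 < ε) {y c : ℝ}
    (h : EqOn f (fun _ => c) (Ioo (y - ε) (y + ε))) : movingAverage ε f y = c := by
  rw [movingAverage, intervalIntegral.integral_of_le (by linarith), integral_Ioc_eq_integral_Ioo,
    setIntegral_congr_fun measurableSet_Ioo h, setIntegral_const,
    Real.volume_real_Ioo_of_le (by linarith), smul_eq_mul]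
  field_simp
  ring

lemma movingAverage_eq_one (hε : 0 < ε) (h : ∀ s, |s| ≤ m → f s = 1) {y : ℝ} (hy : |y| ≤ m - ε) :
    movingAverage ε f y = 1 :=
  movingAverage_eq_of_eqOn hε fun s hs => h s <| by
    have := abs_sub_abs_le_abs_sub s y
    have : |s - y| < ε := abs_sub_lt_iff.2 ⟨by linarith [hs.2], by linarith [hs.1]⟩
    linarith

lemma movingAverage_eq_zero (hε : 0 < ε) (h : ∀ s, m < |s| → f s = 0) {y : ℝ} (hy : m + ε ≤ |y|) :
    movingAverage ε f y = 0 :=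
  movingAverage_eq_of_eqOn hε fun s hs => h s <| by
    have := abs_sub_abs_le_abs_sub y s
    have : |y - s| < ε := abs_sub_lt_iff.2 ⟨by linarith [hs.1], by linarith [hs.2]⟩
    linarith

lemma movingAverage_one_sub (hε : 0 < ε) (hf : ∀ a b, IntervalIntegrable f volume a b) (y : ℝ) :
    movingAverage ε (fun s => 1 - f s) y = 1 - movingAverage ε f y := by
  rw [movingAverage, movingAverage, intervalIntegral.integral_sub intervalIntegrable_const (hf _ _),
    intervalIntegral.integral_const]
  field_simp
  ring

lemma movingAverage_nonneg (hε : 0 ≤ ε) (h0 : ∀ s, 0 ≤ f s) (y : ℝ) : 0 ≤ movingAverage ε f y :=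
  mul_nonneg (by positivity) (intervalIntegral.integral_nonneg (by linarith) fun s _ => h0 s)

lemma movingAverage_le_one (hε : 0 < ε) (hf : ∀ a b, IntervalIntegrable f volume a b)
    (h1 : ∀ s, f s ≤ 1) (y : ℝ) : movingAverage ε f y ≤ 1 := by
  have := movingAverage_nonneg hε.le (fun s => sub_nonneg.2 (h1 s)) y
  rw [movingAverage_one_sub hε hf] at this
  linarith

lemma movingAverage_pos_of_pos_on_Ioo (hf : ∀ a b, IntervalIntegrable f volume a b)
    (h0 : ∀ s, 0 ≤ f s) {y c d : ℝ} (hcd : c < d) (hc : y - ε ≤ c) (hd : d ≤ y + ε)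
    (hpos : ∀ t ∈ Ioo c d, 0 < f t) : 0 < movingAverage ε f y := by
  have hε : 0 < ε := by linarith
  refine mul_pos (by positivity) ?_
  calc 0 < ∫ s in c..d, f s := intervalIntegral.intervalIntegral_pos_of_pos_on (hf _ _) hpos hcd
    _ ≤ ∫ s in y - ε..y + ε, f s :=
      intervalIntegral.integral_mono_interval hc hcd.le hd (.of_forall h0) (hf _ _)

lemma movingAverage_pos (hε : 0 < ε) (hm : 0 < m) (hf : ∀ a b, IntervalIntegrable f volume a b)
    (h0 : ∀ s, 0 ≤ f s) (hpos : ∀ t, |t| < m → 0 < f t) {y : ℝ} (hy : |y| < m + ε) :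
    0 < movingAverage ε f y := by
  have ⟨hy₁, hy₂⟩ := abs_lt.1 hy
  refine movingAverage_pos_of_pos_on_Ioo hf h0 (c := max (y - ε) (-m)) (d := min (y + ε) m)
    (max_lt (lt_min (by linarith) (by linarith)) (lt_min (by linarith) (by linarith)))
    (le_max_left _ _) (min_le_left _ _) fun t ht => hpos t (abs_lt.2 ?_)
  exact ⟨(le_max_right _ _).trans_lt ht.1, ht.2.trans_le (min_le_right _ _)⟩

lemma movingAverage_lt_one (hε : 0 < ε) (hf : ∀ a b, IntervalIntegrable f volume a b)
    (h1 : ∀ s, f s ≤ 1) (hlt : ∀ t, m < |t| → f t < 1) {y : ℝ} (hy : m - ε < |y|) :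
    movingAverage ε f y < 1 := by
  suffices 0 < movingAverage ε (fun s => 1 - f s) y by
    rw [movingAverage_one_sub hε hf] at this; linarith
  have hg : ∀ a b, IntervalIntegrable (fun s => 1 - f s) volume a b := fun a b =>
    intervalIntegrable_const.sub (hf a b)
  have hg0 : ∀ s, 0 ≤ 1 - f s := fun s => sub_nonneg.2 (h1 s)
  rcases le_or_gt 0 y with hy0 | hy0
  · rw [abs_of_nonneg hy0] at hy
    refine movingAverage_pos_of_pos_on_Ioo hg hg0 (c := max (y - ε) m) (d := y + ε)
      (max_lt (by linarith) (by linarith)) (le_max_left _ _) le_rfl fun t ht => ?_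
    have := (le_max_right _ _).trans_lt ht.1
    linarith [hlt t (this.trans_le (le_abs_self t))]
  · rw [abs_of_neg hy0] at hy
    refine movingAverage_pos_of_pos_on_Ioo hg hg0 (c := y - ε) (d := min (y + ε) (-m))
      (lt_min (by linarith) (by linarith)) le_rfl (min_le_left _ _) fun t ht => ?_
    have := ht.2.trans_le (min_le_right _ _)
    linarith [hlt t ((lt_neg.1 this).trans_le (neg_le_abs t))]

end Values

section Box

variable {m : ℝ}

lemma integrable_box (m : ℝ) : Integrable (box m) :=
  (integrable_indicator_iff measurableSet_Icc).2 (integrableOn_const (by simp))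

lemma box_eq_one {s : ℝ} (hs : |s| ≤ m) : box m s = 1 :=
  indicator_of_mem (show s ∈ Icc (-m) m from abs_le.1 hs) _

lemma box_eq_zero {s : ℝ} (hs : m < |s|) : box m s = 0 :=
  indicator_of_notMem (fun h : s ∈ Icc (-m) m => hs.not_ge (abs_le.2 h)) _

lemma box_mem_Icc (s : ℝ) : box m s ∈ Icc (0 : ℝ) 1 := by
  by_cases hs : |s| ≤ m
  · simp [box_eq_one hs]
  · simp [box_eq_zero (not_le.1 hs)]

lemma fourier_box (hm : 0 ≤ m) (x : ℝ) :
    𝓕 (fun t => (box m t : ℂ)) x = ∫ t in -m..m, Complex.exp (↑(-2 * π * x) * Complex.I * t) := by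
  rw [Real.fourier_real_eq_integral_exp_smul, intervalIntegral.integral_of_le (by linarith),
    ← integral_Icc_eq_integral_Ioc, ← integral_indicator measurableSet_Icc]
  congr 1 with t
  by_cases ht : t ∈ Icc (-m) m
  · rw [box, indicator_of_mem ht, indicator_of_mem ht, Pi.one_apply, Complex.ofReal_one,
      smul_eq_mul, mul_one]
    push_cast
    ring_nf
  · rw [box, indicator_of_notMem ht, indicator_of_notMem ht, Complex.ofReal_zero, smul_zero]

lemma norm_fourier_box_le (hm : 0 ≤ m) (x : ℝ) : ‖𝓕 (fun t => (box m t : ℂ)) x‖ ≤ 2 * m := by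
  rw [fourier_box hm]
  calc _ ≤ 1 * |m - -m| := intervalIntegral.norm_integral_le_of_norm_le_const fun t _ => by
          simp [Complex.norm_exp]
    _ = 2 * m := by rw [abs_of_nonneg (by linarith)]; ring

lemma norm_fourier_box_le_inv (hm : 0 ≤ m) {x : ℝ} (hx : x ≠ 0) :
    ‖𝓕 (fun t => (box m t : ℂ)) x‖ ≤ (π * |x|)⁻¹ := by
  have hc : (↑(-2 * π * x) * Complex.I : ℂ) ≠ 0 := by simp [hx, pi_ne_zero]
  have hnorm : ‖(↑(-2 * π * x) * Complex.I : ℂ)‖ = 2 * (π * |x|) := by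
    simp only [Complex.norm_mul, Complex.norm_real, norm_eq_abs, abs_mul, Complex.norm_I, mul_one,
      abs_neg, abs_two, abs_of_pos pi_pos]
    ring
  rw [fourier_box hm, integral_exp_mul_complex hc, norm_div, hnorm]
  calc _ ≤ 2 / (2 * (π * |x|)) := by
        gcongr
        refine (norm_sub_le _ _).trans ?_
        norm_num [Complex.norm_exp]
    _ = (π * |x|)⁻¹ := by field_simp

end Box

section Fourier

variable {ε : ℝ} {f : ℝ → ℝ}

lemma movingAverage_eq_convolution (hε : 0 ≤ ε) (f : ℝ → ℝ) :
    movingAverage ε f = (2 * ε)⁻¹ • (box ε ⋆[lsmul ℝ ℝ] f) := by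
  ext y
  simp only [movingAverage, Pi.smul_apply, smul_eq_mul, convolution_def, lsmul_apply, box]
  simp_rw [← indicator_mul_left _ _ (fun t => f (y - t)), Pi.one_apply, one_mul]
  rw [integral_indicator measurableSet_Icc, integral_Icc_eq_integral_Ioc,
    ← intervalIntegral.integral_of_le (by linarith), intervalIntegral.integral_comp_sub_left,
    sub_neg_eq_add]

lemma integrable_movingAverage (hε : 0 ≤ ε) (hf : Integrable f) :
    Integrable (movingAverage ε f) := by
  rw [movingAverage_eq_convolution hε]
  exact ((integrable_box ε).integrable_convolution _ hf).smul _

lemma ofReal_movingAverage (hε : 0 ≤ ε) (f : ℝ → ℝ) :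
    (fun y => (movingAverage ε f y : ℂ)) =
      (2 * (ε : ℂ))⁻¹ • ((fun t => (box ε t : ℂ)) ⋆[mul ℂ ℂ] (fun t => (f t : ℂ))) := by
  ext y
  simp only [movingAverage_eq_convolution hε, Pi.smul_apply, convolution_def, lsmul_apply,
    mul_apply', smul_eq_mul, Complex.ofReal_mul, Complex.ofReal_inv, Complex.ofReal_ofNat,
    ← integral_complex_ofReal]

noncomputable def averagingMultiplier (ε x : ℝ) : ℂ :=
  (2 * (ε : ℂ))⁻¹ * 𝓕 (fun t => (box ε t : ℂ)) x

lemma fourier_movingAverage (hε : 0 ≤ ε) (hf : Integrable f) (x : ℝ) :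
    𝓕 (fun y => (movingAverage ε f y : ℂ)) x =
      averagingMultiplier ε x * 𝓕 (fun t => (f t : ℂ)) x := by
  have hsmul : ∀ (c : ℂ) (g : ℝ → ℂ), 𝓕 (c • g) x = c * 𝓕 g x := fun c g => by
    simp only [Real.fourier_eq, Pi.smul_apply, Circle.smul_def, smul_eq_mul, ← integral_const_mul,
      mul_left_comm c]
  rw [ofReal_movingAverage hε, hsmul, averagingMultiplier, mul_assoc]
  exact congrArg _ (Real.fourier_mul_convolution_eq (R := ℂ) (integrable_box ε).ofReal hf.ofReal x)

lemma norm_averagingMultiplier_le_one (hε : 0 < ε) (x : ℝ) : ‖averagingMultiplier ε x‖ ≤ 1 := by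
  rw [averagingMultiplier, norm_mul, norm_inv, norm_mul, Complex.norm_ofNat, Complex.norm_real,
    Real.norm_of_nonneg hε.le, inv_mul_le_one₀ (by positivity)]
  exact norm_fourier_box_le hε.le x

lemma norm_averagingMultiplier_le (hε : 0 < ε) {x : ℝ} (hx : x ≠ 0) :
    ‖averagingMultiplier ε x‖ ≤ (2 * π * ε * |x|)⁻¹ := by
  rw [averagingMultiplier, norm_mul, norm_inv, norm_mul, Complex.norm_ofNat, Complex.norm_real,
    Real.norm_of_nonneg hε.le]
  calc _ ≤ (2 * ε)⁻¹ * (π * |x|)⁻¹ := by gcongr; exact norm_fourier_box_le_inv hε.le hx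
    _ = (2 * π * ε * |x|)⁻¹ := by rw [← mul_inv]; ring_nf

end Fourier

section Iterate

variable {ε m : ℝ} {f : ℝ → ℝ}

lemma integrable_iterate_movingAverage (hε : 0 ≤ ε) (hf : Integrable f) (k : ℕ) :
    Integrable ((movingAverage ε)^[k] f) :=
  Function.Iterate.rec (fun g : ℝ → ℝ => Integrable g) hf
    (fun _ hg => integrable_movingAverage hε hg) k

lemma iterate_movingAverage_mem_Icc (hε : 0 < ε) (hf : Integrable f)
    (h01 : ∀ s, f s ∈ Icc (0 : ℝ) 1) (k : ℕ) (s : ℝ) :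
    (movingAverage ε)^[k] f s ∈ Icc (0 : ℝ) 1 := by
  induction k generalizing s with
  | zero => exact h01 s
  | succ k ih =>
    have hk : ∀ a b, IntervalIntegrable ((movingAverage ε)^[k] f) volume a b := fun _ _ =>
      (integrable_iterate_movingAverage hε.le hf k).intervalIntegrable
    rw [Function.iterate_succ_apply']
    exact ⟨movingAverage_nonneg hε.le (fun s => (ih s).1) s,
      movingAverage_le_one hε hk (fun s => (ih s).2) s⟩

lemma iterate_movingAverage_eq_one (hε : 0 < ε) (h : ∀ s, |s| ≤ m → f s = 1) (k : ℕ) {y : ℝ}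
    (hy : |y| ≤ m - k * ε) : (movingAverage ε)^[k] f y = 1 := by
  induction k generalizing y with
  | zero => exact h y (by simpa using hy)
  | succ k ih =>
    rw [Function.iterate_succ_apply']
    exact movingAverage_eq_one hε (fun s hs => ih hs) (by push_cast at hy; linarith)

lemma iterate_succ_movingAverage_eq_zero (hε : 0 < ε) (h : ∀ s, m < |s| → f s = 0) (k : ℕ)
    {y : ℝ} (hy : m + (k + 1) * ε ≤ |y|) : (movingAverage ε)^[k + 1] f y = 0 := by
  induction k generalizing y with
  | zero => exact movingAverage_eq_zero hε h (by simpa using hy)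
  | succ k ih =>
    rw [Function.iterate_succ_apply']
    exact movingAverage_eq_zero hε (fun s hs => ih hs.le) (by push_cast at hy; linarith)

lemma iterate_movingAverage_pos (hε : 0 < ε) (hm : 0 < m) (hf : Integrable f)
    (h01 : ∀ s, f s ∈ Icc (0 : ℝ) 1) (hpos : ∀ t, |t| < m → 0 < f t) (k : ℕ) {y : ℝ}
    (hy : |y| < m + k * ε) : 0 < (movingAverage ε)^[k] f y := by
  induction k generalizing y with
  | zero => exact hpos y (by simpa using hy)
  | succ k ih =>
    have hk : ∀ a b, IntervalIntegrable ((movingAverage ε)^[k] f) volume a b := fun _ _ =>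
      (integrable_iterate_movingAverage hε.le hf k).intervalIntegrable
    rw [Function.iterate_succ_apply']
    exact movingAverage_pos hε (by positivity) hk
      (fun s => (iterate_movingAverage_mem_Icc hε hf h01 k s).1) (fun t ht => ih ht)
      (by push_cast at hy; linarith)

lemma iterate_movingAverage_lt_one (hε : 0 < ε) (hf : Integrable f)
    (h01 : ∀ s, f s ∈ Icc (0 : ℝ) 1) (hlt : ∀ t, m < |t| → f t < 1) (k : ℕ) {y : ℝ}
    (hy : m - k * ε < |y|) : (movingAverage ε)^[k] f y < 1 := by
  induction k generalizing y with
  | zero => exact hlt y (by simpa using hy)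
  | succ k ih =>
    have hk : ∀ a b, IntervalIntegrable ((movingAverage ε)^[k] f) volume a b := fun _ _ =>
      (integrable_iterate_movingAverage hε.le hf k).intervalIntegrable
    rw [Function.iterate_succ_apply']
    exact movingAverage_lt_one hε hk
      (fun s => (iterate_movingAverage_mem_Icc hε hf h01 k s).2) (fun t ht => ih ht)
      (by push_cast at hy; linarith)

lemma fourier_iterate_movingAverage (hε : 0 ≤ ε) (hf : Integrable f) (k : ℕ) (x : ℝ) :
    𝓕 (fun y => ((movingAverage ε)^[k] f y : ℂ)) x =
      averagingMultiplier ε x ^ k * 𝓕 (fun t => (f t : ℂ)) x := by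
  induction k with
  | zero => simp
  | succ k ih =>
    simp only [Function.iterate_succ_apply']
    rw [fourier_movingAverage hε (integrable_iterate_movingAverage hε hf k), ih, pow_succ]
    ring

end Iterate

lemma integral_ofReal_mul_exp_eq_fourier (g : ℝ → ℝ) (x : ℝ) :
    ∫ y : ℝ, (g y : ℂ) * Complex.exp (-(2 * π * Complex.I * x * y)) = 𝓕 (fun y => (g y : ℂ)) x := by
  rw [Real.fourier_real_eq_integral_exp_smul]
  congr 1 with y
  rw [smul_eq_mul, mul_comm]
  push_cast
  ring_nf

lemma norm_averagingMultiplier_pow_mul_fourier_box_le {a δ x : ℝ} {r : ℕ} (hr : 0 < r) (ha : 0 ≤ a)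
    (hδ : 0 < δ) (hx : x ≠ 0) :
    ‖averagingMultiplier (δ / (r + 1)) x ^ (r + 1) * 𝓕 (fun t => (box a t : ℂ)) x‖ ≤
      min (2 * a) (1 / |x| * ((r : ℝ) / (|x| * δ)) ^ r) := by
  set K := ‖averagingMultiplier (δ / (r + 1)) x‖
  have hε : 0 < δ / (r + 1) := by positivity
  have hx' : 0 < |x| := abs_pos.2 hx
  have hK0 : 0 ≤ K := norm_nonneg _
  have hK1 : K ≤ 1 := norm_averagingMultiplier_le_one hε x
  have hKr : K ≤ r / (|x| * δ) := by
    have hr' : (1 : ℝ) ≤ r := by exact_mod_cast hr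
    calc K ≤ (2 * π * (δ / (r + 1)) * |x|)⁻¹ := norm_averagingMultiplier_le hε hx
      _ = (r + 1) / (2 * π) / (|x| * δ) := by field_simp
      _ ≤ r / (|x| * δ) := by
        gcongr
        rw [div_le_iff₀ (by positivity)]
        nlinarith [pi_gt_three]
  have hB : ‖𝓕 (fun t => (box a t : ℂ)) x‖ ≤ 1 / |x| := by
    refine (norm_fourier_box_le_inv ha hx).trans ?_
    rw [one_div]
    gcongr
    exact le_mul_of_one_le_left hx'.le (by linarith [pi_gt_three])
  rw [norm_mul, norm_pow]
  refine le_min ?_ ?_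
  · calc K ^ (r + 1) * _ ≤ 1 * (2 * a) :=
          mul_le_mul (pow_le_one₀ hK0 hK1) (norm_fourier_box_le ha x) (norm_nonneg _) zero_le_one
      _ = 2 * a := one_mul _
  · calc K ^ (r + 1) * _ = K ^ r * K * _ := by rw [pow_succ]
      _ ≤ (r / (|x| * δ)) ^ r * 1 * (1 / |x|) := by gcongr
      _ = 1 / |x| * ((r : ℝ) / (|x| * δ)) ^ r := by ring

end SegalSmoothing

open SegalSmoothing

theorem segal_smoothing
    (r : ℕ) (hr : 0 < r) (a δ : ℝ) (hδ : 0 < δ) (hδa : δ < a / 4) :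
    ∃ θ : ℝ → ℝ, ContDiff ℝ r θ ∧
      (∀ y : ℝ, |y| ≤ a - δ → θ y = 1) ∧
      (∀ y : ℝ, a - δ < |y| → |y| < a + δ → 0 < θ y ∧ θ y < 1) ∧
      (∀ y : ℝ, a + δ ≤ |y| → θ y = 0) ∧
      (∀ x : ℝ, x ≠ 0 →
        ‖∫ y : ℝ, (θ y : ℂ) * Complex.exp (-(2 * Real.pi * Complex.I * x * y))‖
          ≤ min (2 * a) (1 / |x| * ((r : ℝ) / (|x| * δ)) ^ r)) := by
  have ha : 0 < a := by linarith
  set ε := δ / (r + 1)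
  have hε : 0 < ε := by positivity
  have hδε : ((r + 1 : ℕ) : ℝ) * ε = δ := by push_cast; exact mul_div_cancel₀ δ (by positivity)
  have hbox := integrable_box a
  refine ⟨(movingAverage ε)^[r + 1] (box a), ?_, fun y hy => ?_, fun y hy₁ hy₂ => ⟨?_, ?_⟩,
    fun y hy => ?_, fun x hx => ?_⟩
  · rw [Function.iterate_succ_apply]
    exact contDiff_iterate_movingAverage ε
      (continuous_movingAverage ε fun _ _ => hbox.intervalIntegrable) r
  · exact iterate_movingAverage_eq_one hε (fun _ => box_eq_one) _ (by rwa [hδε])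
  · exact iterate_movingAverage_pos hε ha hbox box_mem_Icc
      (fun t ht => by rw [box_eq_one ht.le]; exact one_pos) _ (by rwa [hδε])
  · exact iterate_movingAverage_lt_one hε hbox box_mem_Icc
      (fun t ht => by rw [box_eq_zero ht]; exact one_pos) _ (by rwa [hδε])
  · exact iterate_succ_movingAverage_eq_zero hε (fun _ => box_eq_zero) r
      (by push_cast at hδε; rwa [hδε])
  · rw [integral_ofReal_mul_exp_eq_fourier, fourier_iterate_movingAverage hε.le hbox]
    exact norm_averagingMultiplier_pow_mul_fourier_box_le hr ha.le hδ hx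
end

section
/- Let $N$ be a positive integer, $\alpha$ a nonzero real, and for integers $n_1, n_2 \in (N/2, N]$ with $n_1 \ne n_2$ suppose $c > 1$. Then for any real $\tau > 0$: $\sum_{N/2 < n_1, n_2 \le N} \min\left(\tau, \frac{1}{|n_1^c - n_2^c|}\right) \ll_c \tau N + N^{2-c}(\log N + 1)$, where terms with $n_1 = n_2$ contribute $\min(\tau, \infty) = \tau$ each. -/
/-!
Since `x ↦ x ^ (c - 1)` is nondecreasing, `x ^ c - y ^ c ≥ y ^ (c - 1) (x - y)` for `0 < y ≤ x`;
on `(N/2, N]` this gives `1 / |n₁ ^ c - n₂ ^ c| ≪ N ^ (1 - c) / |n₁ - n₂|`. For fixed `n₁` the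
distances `|n₁ - n₂|` run injectively through `[1, N]` on either side of `n₁`, so a row of the
off-diagonal sum is `≪ N ^ (1 - c) (log N + 1)`, and summing the `≤ N` rows gives the bound.
-/

open Finset Real

theorem Real.rpow_sub_one_mul_sub_le_rpow_sub_rpow {c x y : ℝ} (hc : 1 ≤ c) (hy : 0 < y)
    (hyx : y ≤ x) : y ^ (c - 1) * (x - y) ≤ x ^ c - y ^ c := by
  have hx : 0 < x := hy.trans_le hyx
  have hmono : y ^ (c - 1) ≤ x ^ (c - 1) := rpow_le_rpow hy.le hyx (by linarith)
  have hsplit : ∀ z : ℝ, 0 < z → z ^ c = z ^ (c - 1) * z := fun z hz => by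
    rw [rpow_sub_one hz.ne', div_mul_cancel₀ _ hz.ne']
  rw [hsplit x hx, hsplit y hy]
  nlinarith

theorem Real.rpow_sub_one_mul_abs_sub_le_abs_rpow_sub_rpow {a c x y : ℝ} (hc : 1 ≤ c)
    (ha : 0 < a) (hax : a ≤ x) (hay : a ≤ y) : a ^ (c - 1) * |x - y| ≤ |x ^ c - y ^ c| := by
  wlog hyx : y ≤ x generalizing x y
  · rw [abs_sub_comm, abs_sub_comm (x ^ c)]
    exact this hay hax (le_of_not_ge hyx)
  have hy : 0 < y := ha.trans_le hay
  rw [abs_of_nonneg (sub_nonneg.2 hyx),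
    abs_of_nonneg (sub_nonneg.2 (rpow_le_rpow hy.le hyx (by linarith)))]
  calc a ^ (c - 1) * (x - y) ≤ y ^ (c - 1) * (x - y) := by gcongr
    _ ≤ x ^ c - y ^ c := rpow_sub_one_mul_sub_le_rpow_sub_rpow hc hy hyx

theorem sum_inv_natCast_Icc_le_log_add_one (N : ℕ) :
    ∑ k ∈ Icc 1 N, (k : ℝ)⁻¹ ≤ log N + 1 := by
  have h := harmonic_le_one_add_log N
  rw [harmonic_eq_sum_Icc] at h
  push_cast at h
  linarith

theorem Finset.sum_inv_natCast_le_log_add_one_of_injOn {ι : Type*} {s : Finset ι} {f : ι → ℕ}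
    {N : ℕ} (hf : Set.InjOn f s) (hfs : ∀ i ∈ s, f i ∈ Icc 1 N) :
    ∑ i ∈ s, (f i : ℝ)⁻¹ ≤ log N + 1 := by
  rw [← sum_image (f := fun k : ℕ => (k : ℝ)⁻¹) hf]
  refine (sum_le_sum_of_subset_of_nonneg ?_ fun _ _ _ => by positivity).trans
    (sum_inv_natCast_Icc_le_log_add_one N)
  simpa only [image_subset_iff] using hfs

theorem abs_natCast_sub_natCast_of_le {m n : ℕ} (h : m ≤ n) :
    |(n : ℝ) - m| = ((n - m : ℕ) : ℝ) := by
  rw [Nat.cast_sub h, abs_of_nonneg (sub_nonneg.2 (by exact_mod_cast h))]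

theorem Finset.sum_erase_inv_abs_natCast_sub_le {s : Finset ℕ} {n N : ℕ} (hn : n ≤ N)
    (hs : ∀ m ∈ s, m ≤ N) :
    ∑ m ∈ s.erase n, |(n : ℝ) - m|⁻¹ ≤ 2 * (log N + 1) := by
  rw [← sum_filter_add_sum_filter_not _ (· < n)]
  have below : ∑ m ∈ (s.erase n).filter (· < n), |(n : ℝ) - m|⁻¹ ≤ log N + 1 := by
    rw [sum_congr rfl fun m hm => by
      rw [abs_natCast_sub_natCast_of_le (mem_filter.1 hm).2.le]]
    refine sum_inv_natCast_le_log_add_one_of_injOn (fun a ha b hb hab => ?_) fun m hm => ?_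
    · simp only [mem_coe, mem_filter] at ha hb
      omega
    · simp only [mem_filter] at hm
      simp only [mem_Icc]
      omega
  have above : ∑ m ∈ (s.erase n).filter (¬ · < n), |(n : ℝ) - m|⁻¹ ≤ log N + 1 := by
    rw [sum_congr rfl fun m hm => by
      rw [abs_sub_comm, abs_natCast_sub_natCast_of_le (not_lt.1 (mem_filter.1 hm).2)]]
    refine sum_inv_natCast_le_log_add_one_of_injOn (fun a ha b hb hab => ?_) fun m hm => ?_
    · simp only [mem_coe, mem_filter, mem_erase] at ha hb
      omega
    · simp only [mem_filter, mem_erase] at hm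
      have := hs m hm.1.2
      simp only [mem_Icc]
      omega
  linarith

theorem min_one_div_abs_rpow_sub_rpow_le {a c x y τ : ℝ} (hc : 1 ≤ c) (ha : 0 < a)
    (hax : a ≤ x) (hay : a ≤ y) (hxy : x ≠ y) :
    min τ (1 / |x ^ c - y ^ c|) ≤ a ^ (1 - c) * |x - y|⁻¹ := by
  have hgap := rpow_sub_one_mul_abs_sub_le_abs_rpow_sub_rpow hc ha hax hay
  have hpos : 0 < a ^ (c - 1) * |x - y| := by
    have := abs_pos.2 (sub_ne_zero.2 hxy)
    positivity
  calc min τ (1 / |x ^ c - y ^ c|) ≤ 1 / (a ^ (c - 1) * |x - y|) :=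
        (min_le_right _ _).trans (one_div_le_one_div_of_le hpos hgap)
    _ = a ^ (1 - c) * |x - y|⁻¹ := by
        rw [one_div, mul_inv, ← rpow_neg ha.le, neg_sub]

theorem Finset.sum_ite_min_one_div_abs_rpow_sub_rpow_le {s : Finset ℕ} {n N : ℕ} {a c τ : ℝ}
    (hc : 1 ≤ c) (ha : 0 < a) (hs : ∀ m ∈ s, a ≤ m ∧ m ≤ N) (hn : n ∈ s) :
    ∑ m ∈ s, (if n = m then τ else min τ (1 / |(n : ℝ) ^ c - (m : ℝ) ^ c|))
      ≤ τ + a ^ (1 - c) * (2 * (log N + 1)) := by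
  rw [← add_sum_erase s _ hn, if_pos rfl]
  gcongr
  calc ∑ m ∈ s.erase n, (if n = m then τ else min τ (1 / |(n : ℝ) ^ c - (m : ℝ) ^ c|))
      ≤ ∑ m ∈ s.erase n, a ^ (1 - c) * |(n : ℝ) - m|⁻¹ := by
        refine sum_le_sum fun m hm => ?_
        have hmn := ne_of_mem_erase hm
        rw [if_neg hmn.symm]
        exact min_one_div_abs_rpow_sub_rpow_le hc ha (hs n hn).1 (hs m (mem_of_mem_erase hm)).1
          (Nat.cast_injective.ne hmn.symm)
    _ ≤ a ^ (1 - c) * (2 * (log N + 1)) := by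
        rw [← mul_sum]
        gcongr
        exact sum_erase_inv_abs_natCast_sub_le (hs n hn).2 fun m hm => (hs m hm).2

theorem natCast_div_two_le_of_mem_Ioc {N n : ℕ} (hn : n ∈ Ioc (N / 2) N) : (N : ℝ) / 2 ≤ n := by
  rw [mem_Ioc] at hn
  rw [div_le_iff₀ two_pos]
  exact_mod_cast (by omega : N ≤ n * 2)

theorem natCast_mul_div_two_rpow_one_sub {N : ℕ} (hN : 0 < N) (c : ℝ) :
    (N : ℝ) * (((N : ℝ) / 2) ^ (1 - c) * 2) = 2 ^ c * (N : ℝ) ^ (2 - c) := by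
  have hN' : (0 : ℝ) < N := by exact_mod_cast hN
  rw [div_rpow hN'.le zero_le_two, show (2 : ℝ) - c = 1 - c + 1 by ring,
    rpow_add_one hN'.ne', show c = 1 - (1 - c) by ring, rpow_sub two_pos, rpow_one]
  field_simp

open Finset in
theorem min_sum_estimate (c : ℝ) (hc : 1 < c) :
    ∃ C : ℝ, 0 < C ∧ ∀ (N : ℕ), 0 < N → ∀ (α : ℝ), α ≠ 0 → ∀ (τ : ℝ), 0 < τ →
      ∑ n₁ ∈ Finset.Ioc (N / 2) N, ∑ n₂ ∈ Finset.Ioc (N / 2) N,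
        (if n₁ = n₂ then τ else min τ (1 / |(n₁ : ℝ) ^ c - (n₂ : ℝ) ^ c|))
        ≤ C * (τ * N + (N : ℝ) ^ (2 - c) * (Real.log N + 1)) := by
  refine ⟨2 ^ c, by positivity, fun N hN _ _ τ hτ => ?_⟩
  have hN' : (0 : ℝ) < N := by exact_mod_cast hN
  have hrow := fun n (hn : n ∈ Ioc (N / 2) N) =>
    sum_ite_min_one_div_abs_rpow_sub_rpow_le (τ := τ) hc.le (half_pos hN')
      (fun m hm => ⟨natCast_div_two_le_of_mem_Ioc hm, (mem_Ioc.1 hm).2⟩) hn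
  have hcard : ((Ioc (N / 2) N).card : ℝ) ≤ N := by
    rw [Nat.card_Ioc]
    exact_mod_cast Nat.sub_le N (N / 2)
  have h2c : (1 : ℝ) ≤ 2 ^ c := one_le_rpow one_le_two (by linarith)
  have hlog : 0 ≤ log N + 1 := by
    have := log_natCast_nonneg N
    linarith
  calc _ ≤ ∑ _n ∈ Ioc (N / 2) N, (τ + ((N : ℝ) / 2) ^ (1 - c) * (2 * (log N + 1))) :=
        sum_le_sum hrow
    _ ≤ N * (τ + ((N : ℝ) / 2) ^ (1 - c) * (2 * (log N + 1))) := by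
        rw [sum_const, nsmul_eq_mul]
        gcongr
    _ = τ * N + 2 ^ c * ((N : ℝ) ^ (2 - c) * (log N + 1)) := by
        linear_combination (log N + 1) * natCast_mul_div_two_rpow_one_sub hN c
    _ ≤ 2 ^ c * (τ * N + (N : ℝ) ^ (2 - c) * (log N + 1)) := by
        nlinarith [mul_pos hτ hN']
end
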